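/- Any two distinct vertices lying in the subgroup H = ⟨q+1⟩ are at distance exactly 3 in G_{q,θ}. -/

import Mathlib

/-- The Bose-Chowla set: `a` with `θ^a - θ` in the subfield `F_q`
(characterized as fixed points of the `q`-power Frobenius). -/
def BoseChowla (q : ℕ) {F : Type*} [Field F] (θ : F) : Set (ZMod (q ^ 2 - 1)) :=
  {a | (θ ^ a.val - θ) ^ q = θ ^ a.val - θ}

/-- The Cayley sum graph `G_{q,θ}`: `x ~ y` iff `x ≠ y` and `x + y ∈ A(q,θ)`. -/
def CayleyGraph (q : ℕ) {F : Type*} [Field F] (θ : F) : SimpleGraph (ZMod (q ^ 2 - 1)) :=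
  SimpleGraph.fromRel (fun x y => x + y ∈ BoseChowla q θ)

/-- A graph is `C₄`-free: no four vertices form a 4-cycle. -/
def C4Free {V : Type*} (G : SimpleGraph V) : Prop :=
  ∀ a b c d : V, G.Adj a b → G.Adj b c → G.Adj c d → G.Adj d a → a = c ∨ b = d

/-!
Let `K = 𝔽_q` be the fixed field of the Frobenius `z ↦ z ^ q`. Since `q * (q + 1) = q + 1` in
`ℤ/(q² - 1)`, every power `θ ^ h` with `h ∈ H` lies in `K`, whereas `θ ∉ K`. Hence `θ ^ h - θ ∉ K`,
so `H` misses `A`; and if `a, b ∈ A` differ by `u = θ ^ (a - b) ∈ K`, then `(u - 1) θ ∈ K` forces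
`u = 1`. For distinct `x, y ∈ H` these two facts rule out walks of length one and two. A walk
`x, a₁ - x, a₂ - a₁ + x, y` of length three exists once `x + y = a₁ - a₂ + a₃` with `aᵢ ∈ A`; with
`a₁ = 1` and `w = θ ^ (x + y)` this asks for `θ · θ ^ a₃ = w · θ ^ a₂`, solved by
`θ ^ a₂ = θ - θ ^ (q + 1) / w` and `θ ^ a₃ = w - θ ^ q`, since the norm `θ ^ (q + 1)` and the trace
`θ + θ ^ q` lie in `K`.
-/

section PowVal

variable {M : Type*} [Monoid M] {n : ℕ} {g : M}

lemma pow_mod_of_orderOf_eq (hg : orderOf g = n) (m : ℕ) : g ^ (m % n) = g ^ m :=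
  hg ▸ pow_mod_orderOf g m

lemma pow_val_one (hg : orderOf g = n) : g ^ (1 : ZMod n).val = g := by
  rw [ZMod.val_one_eq_one_mod, pow_mod_of_orderOf_eq hg, pow_one]

lemma pow_val_natCast_mul (hg : orderOf g = n) (k : ℕ) (a : ZMod n) :
    g ^ ((k : ZMod n) * a).val = (g ^ a.val) ^ k := by
  rw [ZMod.val_mul, ZMod.val_natCast, Nat.mod_mul_mod, pow_mod_of_orderOf_eq hg, mul_comm, pow_mul]

variable [NeZero n]

lemma pow_val_add (hg : orderOf g = n) (a b : ZMod n) :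
    g ^ (a + b).val = g ^ a.val * g ^ b.val := by
  rw [ZMod.val_add, pow_mod_of_orderOf_eq hg, pow_add]

lemma pow_val_injective (hg : orderOf g = n) : Function.Injective fun a : ZMod n ↦ g ^ a.val :=
  fun a b hab ↦ ZMod.val_injective n <|
    pow_injOn_Iio_orderOf (hg ▸ a.val_lt) (hg ▸ b.val_lt) hab

lemma exists_pow_val_eq {F : Type*} [Field F] [Fintype F] {θ : F} (hθ : orderOf θ = n)
    (hF : Fintype.card F = n + 1) {v : F} (hv : v ≠ 0) : ∃ a : ZMod n, θ ^ a.val = v := by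
  classical
  have hθ0 : θ ≠ 0 := by
    rintro rfl
    exact NeZero.ne n (hθ ▸ orderOf_eq_zero_iff'.mpr fun k hk ↦ by simp [hk.ne'])
  have himage : Finset.univ.image (fun a : ZMod n ↦ θ ^ a.val) = Finset.univ.erase 0 := by
    refine Finset.eq_of_subset_of_card_le (fun w hw ↦ ?_) ?_
    · obtain ⟨a, -, rfl⟩ := Finset.mem_image.mp hw
      exact Finset.mem_erase.mpr ⟨pow_ne_zero _ hθ0, Finset.mem_univ _⟩
    · rw [Finset.card_image_of_injective _ (pow_val_injective hθ), Finset.card_erase_of_mem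
        (Finset.mem_univ _), Finset.card_univ, hF, Finset.card_univ, ZMod.card, Nat.add_sub_cancel]
  have hv' : v ∈ Finset.univ.image (fun a : ZMod n ↦ θ ^ a.val) := by
    rw [himage]
    exact Finset.mem_erase.mpr ⟨hv, Finset.mem_univ v⟩
  simpa using hv'

end PowVal

lemma exists_ringHom_eq_pow {F : Type*} [Field F] [Fintype F] {q m : ℕ} (hq : IsPrimePow q)
    (hF : Fintype.card F = q ^ m) : ∃ φ : F →+* F, ∀ x, φ x = x ^ q := by
  obtain ⟨p, k, hp, -, rfl⟩ := hq
  have : Fact p.Prime := ⟨Nat.prime_iff.mpr hp⟩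
  have : CharP F p := charP_of_card_eq_prime_pow (f := k * m) (by rw [hF, pow_mul])
  exact ⟨iterateFrobenius F p k, fun x ↦ iterateFrobenius_def p k x⟩

lemma SimpleGraph.dist_eq_three_of_two_lt_edist {V : Type*} {G : SimpleGraph V} {u v : V}
    (h : 2 < G.edist u v) (p : G.Walk u v) (hp : p.length = 3) : G.dist u v = 3 := by
  have h3 : G.edist u v = 3 :=
    le_antisymm (by simpa [hp] using p.edist_le) (Order.add_one_le_of_lt h)
  simp [SimpleGraph.dist, h3]

def cayleySumGraph {G : Type*} [Add G] (S : Set G) : SimpleGraph G :=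
  SimpleGraph.fromRel fun x y ↦ x + y ∈ S

section CayleySumGraph

variable {G : Type*} [AddCommGroup G] {S : Set G} {H : AddSubgroup G}

lemma cayleySumGraph_adj {x y : G} : (cayleySumGraph S).Adj x y ↔ x ≠ y ∧ x + y ∈ S := by
  simp [cayleySumGraph, add_comm y x]

variable (hHS : ∀ h ∈ H, h ∉ S) (hS : ∀ a ∈ S, ∀ b ∈ S, a - b ∈ H → a = b)
  {x y : G} (hx : x ∈ H) (hy : y ∈ H) (hxy : x ≠ y)
include hHS hS hx hy hxy

lemma two_lt_edist_cayleySumGraph : 2 < (cayleySumGraph S).edist x y := by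
  refine SimpleGraph.two_lt_edist_iff.mpr ⟨hxy, fun hadj ↦ ?_, ?_⟩
  · exact hHS _ (add_mem hx hy) (cayleySumGraph_adj.mp hadj).2
  · refine Set.eq_empty_of_forall_notMem fun v hv ↦ hxy ?_
    obtain ⟨hxv, hvy⟩ := (SimpleGraph.mem_commonNeighbors _).mp hv
    have hsum := hS _ (cayleySumGraph_adj.mp hxv).2 _ (cayleySumGraph_adj.mp hvy.symm).2
      (by simpa [add_sub_add_comm] using sub_mem hx hy)
    exact add_right_cancel (hsum.trans (add_comm v y))

lemma cayleySumGraph_dist_eq_three {a₁ a₂ a₃ : G} (h₁ : a₁ ∈ S) (h₂ : a₂ ∈ S) (h₃ : a₃ ∈ S)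
    (hsum : a₁ - a₂ + a₃ = x + y) : (cayleySumGraph S).dist x y = 3 := by
  have e₁ : (cayleySumGraph S).Adj x (a₁ - x) := by
    refine cayleySumGraph_adj.mpr ⟨fun h ↦ hHS _ (add_mem hx hx) ?_, by simpa using h₁⟩
    rwa [eq_sub_iff_add_eq.mp h]
  have e₂ : (cayleySumGraph S).Adj (a₁ - x) (a₂ - a₁ + x) := by
    refine cayleySumGraph_adj.mpr ⟨fun h ↦ hxy ?_, by simpa using h₂⟩
    have : a₃ = a₁ := hS _ h₃ _ h₁ <| by
      convert sub_mem hy hx using 1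
      linear_combination (norm := module) hsum - h
    linear_combination (norm := module) hsum - h - this
  have e₃ : (cayleySumGraph S).Adj (a₂ - a₁ + x) y := by
    have hy₃ : a₂ - a₁ + x + y = a₃ := by linear_combination (norm := module) -hsum
    refine cayleySumGraph_adj.mpr ⟨fun h ↦ hHS _ (add_mem hy hy) ?_, hy₃ ▸ h₃⟩
    rwa [← hy₃, h] at h₃
  exact SimpleGraph.dist_eq_three_of_two_lt_edist (two_lt_edist_cayleySumGraph hHS hS hx hy hxy)
    (.cons e₁ (.cons e₂ (.cons e₃ .nil))) rfl

end CayleySumGraph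

lemma natCast_sq_eq_one {q : ℕ} (hq : q ≠ 0) : (q : ZMod (q ^ 2 - 1)) ^ 2 = 1 := by
  have h := ZMod.natCast_self (q ^ 2 - 1)
  rwa [Nat.cast_sub (Nat.one_le_pow _ _ (Nat.pos_of_ne_zero hq)), Nat.cast_pow, Nat.cast_one,
    sub_eq_zero] at h

lemma Subfield.eq_zero_of_mul_mem {F : Type*} [Field F] {K : Subfield F} {c θ : F} (hθ : θ ∉ K)
    (hc : c ∈ K) (h : c * θ ∈ K) : c = 0 := by
  by_contra hc0
  exact hθ (by simpa [hc0] using K.mul_mem (K.inv_mem hc) h)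

section BoseChowla

variable {q : ℕ} {F : Type*} [Field F] {θ : F} {φ : F →+* F}
  (hφ : ∀ x, φ x = x ^ q) (hθ : orderOf θ = q ^ 2 - 1)
include hφ

lemma mem_boseChowla_iff (a : ZMod (q ^ 2 - 1)) :
    a ∈ BoseChowla q θ ↔ θ ^ a.val - θ ∈ φ.eqLocusField (RingHom.id F) := by
  simp [BoseChowla, RingHom.mem_eqLocusField, hφ]

include hθ
variable [NeZero (q ^ 2 - 1)]

lemma notMem_eqLocusField : θ ∉ φ.eqLocusField (RingHom.id F) := by
  have hq : 2 ≤ q := by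
    have := NeZero.ne (q ^ 2 - 1)
    by_contra! h
    interval_cases q <;> simp at this
  have hlt : q < q ^ 2 - 1 := by
    have : 2 * q ≤ q ^ 2 := by nlinarith
    omega
  intro h
  rw [RingHom.mem_eqLocusField, hφ, RingHom.id_apply] at h
  have := pow_injOn_Iio_orderOf (x := θ) (by rw [hθ]; exact hlt)
    (by rw [hθ]; exact Set.mem_Iio.mpr (by omega)) (h.trans (pow_one θ).symm)
  omega

lemma pow_val_mem_eqLocusField {h : ZMod (q ^ 2 - 1)}
    (hh : h ∈ AddSubgroup.zmultiples ((q : ZMod (q ^ 2 - 1)) + 1)) :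
    θ ^ h.val ∈ φ.eqLocusField (RingHom.id F) := by
  obtain ⟨m, rfl⟩ := AddSubgroup.mem_zmultiples_iff.mp hh
  have hsq := natCast_sq_eq_one (q := q) fun h ↦ NeZero.ne (q ^ 2 - 1) (by simp [h])
  rw [RingHom.mem_eqLocusField, RingHom.id_apply, hφ, ← pow_val_natCast_mul hθ]
  congr 2
  -- multiplication by `q` fixes `q + 1` because `q ^ 2 = 1`
  rw [zsmul_eq_mul]
  linear_combination (m : ZMod (q ^ 2 - 1)) * hsq

lemma map_pow_self : φ (θ ^ q) = θ := by
  have hsq := natCast_sq_eq_one (q := q) fun h ↦ NeZero.ne (q ^ 2 - 1) (by simp [h])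
  conv_lhs => rw [← pow_val_one hθ]
  rw [hφ, ← pow_val_natCast_mul hθ, ← pow_val_natCast_mul hθ, ← mul_assoc, ← sq, hsq, one_mul,
    pow_val_one hθ]

lemma notMem_boseChowla {h : ZMod (q ^ 2 - 1)}
    (hh : h ∈ AddSubgroup.zmultiples ((q : ZMod (q ^ 2 - 1)) + 1)) : h ∉ BoseChowla q θ := by
  rw [mem_boseChowla_iff hφ]
  intro hA
  exact notMem_eqLocusField hφ hθ (by
    simpa using Subfield.sub_mem _ (pow_val_mem_eqLocusField hφ hθ hh) hA)

lemma eq_of_sub_mem_zmultiples {a b : ZMod (q ^ 2 - 1)} (ha : a ∈ BoseChowla q θ)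
    (hb : b ∈ BoseChowla q θ) (hab : a - b ∈ AddSubgroup.zmultiples ((q : ZMod (q ^ 2 - 1)) + 1)) :
    a = b := by
  set K := φ.eqLocusField (RingHom.id F)
  set u := θ ^ (a - b).val
  rw [mem_boseChowla_iff hφ] at ha hb
  have hu : u ∈ K := pow_val_mem_eqLocusField hφ hθ hab
  have hfactor : θ ^ a.val = u * θ ^ b.val := by rw [← pow_val_add hθ, sub_add_cancel]
  -- `(u - 1) θ = (θ^a - θ) - u (θ^b - θ)` lies in `K`, which forces `u = 1`
  have hu1 : u - 1 = 0 := Subfield.eq_zero_of_mul_mem (notMem_eqLocusField hφ hθ)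
    (K.sub_mem hu K.one_mem) (by
      convert K.sub_mem ha (K.mul_mem hu hb) using 1
      linear_combination -hfactor)
  rw [sub_eq_zero] at hu1
  exact sub_eq_zero.mp (pow_val_injective hθ (hu1.trans (by simp)))

lemma exists_boseChowla_sub_add_eq [Fintype F] (hF : Fintype.card F = q ^ 2)
    {s : ZMod (q ^ 2 - 1)} (hs : s ∈ AddSubgroup.zmultiples ((q : ZMod (q ^ 2 - 1)) + 1)) :
    ∃ a₁ ∈ BoseChowla q θ, ∃ a₂ ∈ BoseChowla q θ, ∃ a₃ ∈ BoseChowla q θ, a₁ - a₂ + a₃ = s := by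
  set K := φ.eqLocusField (RingHom.id F)
  set w := θ ^ s.val
  have hθK : θ ∉ K := notMem_eqLocusField hφ hθ
  have hw : w ∈ K := pow_val_mem_eqLocusField hφ hθ hs
  have hw0 : w ≠ 0 := pow_ne_zero _ fun h ↦ hθK (h ▸ K.zero_mem)
  have htrace : θ + θ ^ q ∈ K := by
    rw [RingHom.mem_eqLocusField, map_add, map_pow_self hφ hθ, hφ, add_comm, RingHom.id_apply]
  have hnorm : θ * θ ^ q ∈ K := by
    rw [RingHom.mem_eqLocusField, map_mul, map_pow_self hφ hθ, hφ, mul_comm, RingHom.id_apply]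
  have hcard : Fintype.card F = q ^ 2 - 1 + 1 := by
    have := NeZero.ne (q ^ 2 - 1)
    omega
  have hshift : ∀ t ∈ K, ∃ a ∈ BoseChowla q θ, θ ^ a.val = θ + t := fun t ht ↦ by
    obtain ⟨a, ha⟩ := exists_pow_val_eq hθ hcard (v := θ + t) fun h ↦
      hθK (by rw [eq_neg_of_add_eq_zero_left h]; exact K.neg_mem ht)
    exact ⟨a, (mem_boseChowla_iff hφ a).mpr (by rwa [ha, add_sub_cancel_left]), ha⟩
  -- `θ^b = θ - θ^{q+1}/w` and `θ^c = w - θ^q` satisfy `θ · θ^c = w · θ^b`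
  obtain ⟨b, hbA, hb⟩ := hshift _ (K.neg_mem (K.div_mem hnorm hw))
  obtain ⟨c, hcA, hc⟩ := hshift _ (K.sub_mem hw htrace)
  have h1A : (1 : ZMod (q ^ 2 - 1)) ∈ BoseChowla q θ :=
    (mem_boseChowla_iff hφ 1).mpr (by simp [pow_val_one hθ])
  refine ⟨1, h1A, b, hbA, c, hcA, ?_⟩
  have : 1 + c = s + b := pow_val_injective hθ <| by
    simp only [pow_val_add hθ, pow_val_one hθ, hb, hc]
    field_simp
    ring
  linear_combination this

end BoseChowla

theorem subgroup_distance_three (q : ℕ) (hq : IsPrimePow q) (F : Type*) [Field F]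
    [Fintype F] (hF : Fintype.card F = q ^ 2) (θ : F) (hθ : orderOf θ = q ^ 2 - 1) :
    ∀ x ∈ AddSubgroup.zmultiples ((q : ZMod (q ^ 2 - 1)) + 1),
      ∀ y ∈ AddSubgroup.zmultiples ((q : ZMod (q ^ 2 - 1)) + 1),
        x ≠ y → (CayleyGraph q θ).dist x y = 3 := by
  intro x hx y hy hxy
  obtain ⟨φ, hφ⟩ := exists_ringHom_eq_pow hq hF
  have : NeZero (q ^ 2 - 1) := ⟨by have := Nat.pow_le_pow_left hq.two_le 2; omega⟩
  obtain ⟨a₁, h₁, a₂, h₂, a₃, h₃, hsum⟩ :=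
    exists_boseChowla_sub_add_eq hφ hθ hF (add_mem hx hy)
  exact cayleySumGraph_dist_eq_three (fun _ ↦ notMem_boseChowla hφ hθ)
    (fun _ ha _ hb ↦ eq_of_sub_mem_zmultiples hφ hθ ha hb) hx hy hxy h₁ h₂ h₃ hsum
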